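/- arXiv:2112.13041 — 3 statements merged into one kernel-verified Lean document; each statement's English description precedes it below -/
import Mathlib

section
/- Let (Ω, ℱ, P) be a probability space, γ > 0, N ∈ ℕ. Let X : Ω → ℝ be a random variable whose law is Gaussian with mean m and variance v ≥ 0, let Z : Ω → Fin N be a measurable random variable independent of X, and let δ : Fin N → ℝ. Define the contingent claim S := X · δ(Z). Then the entropic risk of S is e_γ(S) = −γ · ln ( Σ_{i} P(Z = i) · exp( −δ_i·m/γ + δ_i²·v/(2γ²) ) ). -/
/-! Split the expectation over the finitely many regimes `{Z = i}`. On `{Z = i}` the integrand is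
`exp (-(δ i / γ) * X)`, which depends on `X` alone, so by independence its integral over `{Z = i}`
is `P(Z = i)` times the Gaussian moment generating function of `X` at `-δ i / γ`. -/

open MeasureTheory ProbabilityTheory
open scoped NNReal

namespace ProbabilityTheory

theorem IndepFun.integral_comp_eq_sum_measureReal_mul {Ω β ι : Type*} [MeasurableSpace Ω]
    {P : Measure Ω} [MeasurableSpace β] [Fintype ι] [MeasurableSpace ι]
    [MeasurableSingletonClass ι] {X : Ω → β} {Z : Ω → ι} (hindep : IndepFun X Z P)
    (hX : AEMeasurable X P) (hZ : Measurable Z) {f : ι → β → ℝ} (hf : ∀ i, Measurable (f i))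
    (hfX : ∀ i, Integrable (fun ω ↦ f i (X ω)) P) :
    ∫ ω, f (Z ω) (X ω) ∂P = ∑ i, P.real (Z ⁻¹' {i}) * ∫ ω, f i (X ω) ∂P := by
  have hfiber (i : ι) : Set.EqOn (fun ω ↦ f i (X ω)) (fun ω ↦ f (Z ω) (X ω)) (Z ⁻¹' {i}) :=
    fun ω (hω : Z ω = i) ↦ congrArg (f · (X ω)) hω.symm
  calc ∫ ω, f (Z ω) (X ω) ∂P = ∫ ω in ⋃ i, Z ⁻¹' {i}, f (Z ω) (X ω) ∂P := by
        rw [← Set.preimage_iUnion, Set.iUnion_of_singleton, Set.preimage_univ, setIntegral_univ]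
    _ = ∑ i, ∫ ω in Z ⁻¹' {i}, f i (X ω) ∂P := by
        rw [integral_iUnion_fintype (fun i ↦ hZ (measurableSet_singleton i))
          (fun i j hij ↦ (Set.disjoint_singleton.mpr hij).preimage Z)
          (fun i ↦ (hfX i).integrableOn.congr_fun (hfiber i) (hZ (measurableSet_singleton i)))]
        exact Finset.sum_congr rfl fun i _ ↦
          (setIntegral_congr_fun (hZ (measurableSet_singleton i)) (hfiber i)).symm
    _ = ∑ i, P.real (Z ⁻¹' {i}) * ∫ ω, f i (X ω) ∂P :=
        Finset.sum_congr rfl fun i _ ↦ Indep.setIntegral_eq_mul hZ.comap_le hindep.symm hX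
          ⟨{i}, measurableSet_singleton i, rfl⟩ (hf i).aestronglyMeasurable

theorem integrable_exp_mul_of_map_eq_gaussianReal {Ω : Type*} [MeasurableSpace Ω]
    {P : Measure Ω} [IsProbabilityMeasure P] {X : Ω → ℝ} {m : ℝ} {v : ℝ≥0}
    (hlaw : P.map X = gaussianReal m v) (t : ℝ) :
    Integrable (fun ω ↦ Real.exp (t * X ω)) P := by
  rw [← mgf_pos_iff, mgf_gaussianReal hlaw]
  exact Real.exp_pos _

end ProbabilityTheory

theorem entropic_risk_regime_linear_general {Ω : Type*} [MeasurableSpace Ω]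
    (P : Measure Ω) [IsProbabilityMeasure P]
    (γ : ℝ) (N : ℕ) (m : ℝ) (v : ℝ≥0)
    (X : Ω → ℝ) (hX : Measurable X) (hlaw : P.map X = gaussianReal m v)
    (Z : Ω → Fin N) (hZ : Measurable Z) (hindep : IndepFun X Z P)
    (δ : Fin N → ℝ) :
    -γ * Real.log (∫ ω, Real.exp (-(X ω * δ (Z ω)) / γ) ∂P) =
      -γ * Real.log (∑ i : Fin N, (P (Z ⁻¹' {i})).toReal *
        Real.exp (-(δ i * m) / γ + (δ i) ^ 2 * (v : ℝ) / (2 * γ ^ 2))) := by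
  let f : Fin N → ℝ → ℝ := fun i x ↦ Real.exp (-δ i / γ * x)
  have hmgf (i : Fin N) : ∫ ω, f i (X ω) ∂P =
      Real.exp (-(δ i * m) / γ + (δ i) ^ 2 * (v : ℝ) / (2 * γ ^ 2)) := by
    rw [← mgf, mgf_gaussianReal hlaw]
    ring_nf
  have hmean : ∫ ω, Real.exp (-(X ω * δ (Z ω)) / γ) ∂P = ∑ i : Fin N, (P (Z ⁻¹' {i})).toReal *
      Real.exp (-(δ i * m) / γ + (δ i) ^ 2 * (v : ℝ) / (2 * γ ^ 2)) :=
    calc ∫ ω, Real.exp (-(X ω * δ (Z ω)) / γ) ∂P = ∫ ω, f (Z ω) (X ω) ∂P := by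
          congr with ω
          simp only [f]
          ring_nf
      _ = ∑ i, P.real (Z ⁻¹' {i}) * ∫ ω, f i (X ω) ∂P :=
          hindep.integral_comp_eq_sum_measureReal_mul hX.aemeasurable hZ (fun i ↦ by fun_prop)
            fun i ↦ integrable_exp_mul_of_map_eq_gaussianReal hlaw _
      _ = _ := by simp only [hmgf, measureReal_def]
  rw [hmean]

/-- Entropic risk of a regime-dependent linear claim `S = X · δ(Z)` on a Gaussian spot price `X`
independent of the regime variable `Z`:
`e_γ(S) = -γ ln ( Σ_i P(Z = i) exp(−δ_i m/γ + δ_i² v/(2γ²)) )`. -/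
theorem entropic_risk_regime_linear {Ω : Type*} [MeasurableSpace Ω]
    (P : Measure Ω) [IsProbabilityMeasure P]
    (γ : ℝ) (hγ : 0 < γ) (N : ℕ) (m : ℝ) (v : ℝ≥0)
    (X : Ω → ℝ) (hX : Measurable X) (hlaw : P.map X = gaussianReal m v)
    (Z : Ω → Fin N) (hZ : Measurable Z) (hindep : IndepFun X Z P)
    (δ : Fin N → ℝ) :
    -γ * Real.log (∫ ω, Real.exp (-(X ω * δ (Z ω)) / γ) ∂P) =
      -γ * Real.log (∑ i : Fin N, (P (Z ⁻¹' {i})).toReal *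
        Real.exp (-(δ i * m) / γ + (δ i) ^ 2 * (v : ℝ) / (2 * γ ^ 2))) :=
  entropic_risk_regime_linear_general P γ N m v X hX hlaw Z hZ hindep δ
end

section
/- Let (Ω, ℱ, P) be a probability space, γ > 0, N ∈ ℕ, T ≥ 0, and let A : Matrix (Fin N) (Fin N) ℝ and z₀ : Fin N → ℝ. Let X : Ω → ℝ have Gaussian law with mean m_{0,T} := x₀·e^{−αT} + μ·(1 − e^{−αT}) and variance v_{0,T} := σ²·(1 − e^{−2αT})/(2α), where x₀, μ, σ ∈ ℝ and α > 0. Let Z : Ω → Fin N be measurable, independent of X, with P(Z = i) = ((Matrix.exp (T • A)) *ᵥ z₀)_i for every i. Define φ_i := exp( −δ_i·m_{0,T}/γ + δ_i²·v_{0,T}/(2γ²) ) for δ : Fin N → ℝ. Then the entropic risk of S := X · δ(Z) satisfies e_γ(S) = −γ · ln ⟨ (Matrix.exp (T • Aᵀ)) *ᵥ φ , z₀ ⟩, where ⟨·,·⟩ is the Euclidean dot product on ℝ^N. In particular, if z₀ is the j-th standard basis vector then e_γ(S) = −λ_j with λ_j := γ · ln ((Matrix.exp (T • Aᵀ)) *ᵥ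 φ)_j. -/
open MeasureTheory ProbabilityTheory Matrix
open scoped NNReal

lemma gauss_pdf_mul_exp (m : ℝ) {v : ℝ≥0} (hv : v ≠ 0) (t x : ℝ) :
    gaussianPDFReal m v x * Real.exp (t * x)
      = Real.exp (m * t + (v : ℝ) * t ^ 2 / 2) * gaussianPDFReal (m + v * t) v x := by
  have hv' : (v : ℝ) ≠ 0 := by exact_mod_cast hv
  simp only [gaussianPDFReal]
  have h : -(x - m) ^ 2 / (2 * (v : ℝ)) + t * x
      = (m * t + (v : ℝ) * t ^ 2 / 2) + -(x - (m + (v : ℝ) * t)) ^ 2 / (2 * (v : ℝ)) := by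
    field_simp
    ring
  rw [mul_assoc, ← Real.exp_add, h, Real.exp_add]
  ring

lemma gauss_density_eq (m : ℝ) {v : ℝ≥0} (hv : v ≠ 0) :
    gaussianReal m v
      = MeasureTheory.volume.withDensity
          (fun x => ((Real.toNNReal (gaussianPDFReal m v x) : ℝ≥0) : ENNReal)) := by
  rw [gaussianReal_of_var_ne_zero _ hv]
  rfl

lemma gauss_smul_eq (m : ℝ) {v : ℝ≥0} (hv : v ≠ 0) (t : ℝ) (x : ℝ) :
    (Real.toNNReal (gaussianPDFReal m v x) : ℝ≥0) • Real.exp (t * x)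
      = Real.exp (m * t + (v : ℝ) * t ^ 2 / 2) * gaussianPDFReal (m + v * t) v x := by
  rw [NNReal.smul_def, Real.coe_toNNReal _ (gaussianPDFReal_nonneg _ _ _)]
  exact gauss_pdf_mul_exp m hv t x

lemma gauss_exp_integrable (m : ℝ) (v : ℝ≥0) (t : ℝ) :
    Integrable (fun x => Real.exp (t * x)) (gaussianReal m v) := by
  by_cases hv : v = 0
  · rw [hv, gaussianReal_zero_var]
    have h0 : (fun _ : ℝ => Real.exp (t * m)) =ᵐ[MeasureTheory.Measure.dirac m]
        (fun x => Real.exp (t * x)) := by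
      rw [Filter.EventuallyEq, MeasureTheory.ae_dirac_eq]
      exact Filter.eventually_pure.2 rfl
    exact (integrable_const _).congr h0
  · rw [gauss_density_eq m hv,
      integrable_withDensity_iff_integrable_smul
        ((measurable_gaussianPDFReal m v).real_toNNReal)]
    have : (fun x => (Real.toNNReal (gaussianPDFReal m v x) : ℝ≥0) • Real.exp (t * x))
        = fun x => Real.exp (m * t + (v : ℝ) * t ^ 2 / 2) * gaussianPDFReal (m + v * t) v x := by
      funext x; exact gauss_smul_eq m hv t x
    rw [this]
    exact (integrable_gaussianPDFReal _ _).const_mul _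

lemma gauss_mgf (m : ℝ) (v : ℝ≥0) (t : ℝ) :
    ∫ x, Real.exp (t * x) ∂(gaussianReal m v)
      = Real.exp (m * t + (v : ℝ) * t ^ 2 / 2) := by
  by_cases hv : v = 0
  · rw [hv, gaussianReal_zero_var, integral_dirac]
    simp [mul_comm]
  · rw [gauss_density_eq m hv,
      integral_withDensity_eq_integral_smul
        ((measurable_gaussianPDFReal m v).real_toNNReal)]
    simp_rw [gauss_smul_eq m hv t]
    rw [integral_const_mul, integral_gaussianPDFReal_eq_one _ hv, mul_one]

/-- Lemma 1 of the paper: the entropic risk at time 0 of the claim `S = X_T · ⟨δ, Z_T⟩`,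
where `X_T` is the time-`T` marginal of an Ornstein–Uhlenbeck spot price (Gaussian with mean
`m = x₀ e^{-αT} + μ(1 - e^{-αT})` and variance `v = σ²(1 - e^{-2αT})/(2α)`) and `Z_T` is the
time-`T` state of a Markov chain with rate matrix `A` started at `z₀` (so it has distribution
`exp(TA) z₀`), is `e_γ(S) = -γ ln ⟨exp(T Aᵀ) φ, z₀⟩`; in particular, if `z₀` is the `j`-th
standard basis vector, then `e_γ(S) = -λ_j` with `λ_j = γ ln (exp(T Aᵀ) φ)_j`. -/
theorem entropic_risk_regime_linear_markov {Ω : Type*} [MeasurableSpace Ω]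
    (P : Measure Ω) [IsProbabilityMeasure P]
    (γ : ℝ) (hγ : 0 < γ) (N : ℕ) (T : ℝ) (hT : 0 ≤ T)
    (A : Matrix (Fin N) (Fin N) ℝ) (z₀ : Fin N → ℝ)
    (x₀ μ σ α : ℝ) (hα : 0 < α)
    (m : ℝ) (hm : m = x₀ * Real.exp (-α * T) + μ * (1 - Real.exp (-α * T)))
    (v : ℝ≥0) (hv : (v : ℝ) = σ ^ 2 * (1 - Real.exp (-2 * α * T)) / (2 * α))
    (X : Ω → ℝ) (hX : Measurable X) (hXlaw : P.map X = gaussianReal m v)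
    (Z : Ω → Fin N) (hZ : Measurable Z) (hindep : IndepFun X Z P)
    (hZlaw : ∀ i, (P (Z ⁻¹' {i})).toReal = ((NormedSpace.exp (T • A)) *ᵥ z₀) i)
    (δ : Fin N → ℝ)
    (φ : Fin N → ℝ)
    (hφ : ∀ i, φ i = Real.exp (-(δ i * m) / γ + (δ i) ^ 2 * (v : ℝ) / (2 * γ ^ 2))) :
    (-γ * Real.log (∫ ω, Real.exp (-(X ω * δ (Z ω)) / γ) ∂P) =
      -γ * Real.log ((NormedSpace.exp (T • Aᵀ) *ᵥ φ) ⬝ᵥ z₀)) ∧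
    (∀ j : Fin N, z₀ = Pi.single j 1 →
      -γ * Real.log (∫ ω, Real.exp (-(X ω * δ (Z ω)) / γ) ∂P) =
        -(γ * Real.log ((NormedSpace.exp (T • Aᵀ) *ᵥ φ) j))) := by
  set t : Fin N → ℝ := fun i => -(δ i) / γ with ht
  -- integrability of exp(t i * X) under P
  have hintX : ∀ (c : ℝ), Integrable (fun ω => Real.exp (c * X ω)) P := by
    intro c
    have := gauss_exp_integrable m v c
    rw [← hXlaw] at this
    exact (integrable_map_measure ((measurable_id.const_mul c).exp.aestronglyMeasurable) hX.aemeasurable).mp this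
  -- each term's integral
  have hterm : ∀ i : Fin N,
      ∫ ω, (if Z ω = i then (1 : ℝ) else 0) * Real.exp (t i * X ω) ∂P
        = ((NormedSpace.exp (T • A)) *ᵥ z₀) i * φ i := by
    intro i
    have hmeasg : Measurable (fun j : Fin N => if j = i then (1 : ℝ) else 0) :=
      measurable_of_countable _
    have hmeasf : Measurable (fun x : ℝ => Real.exp (t i * x)) := by fun_prop
    have hind : IndepFun (fun ω => (if Z ω = i then (1 : ℝ) else 0))
        (fun ω => Real.exp (t i * X ω)) P :=
      (hindep.comp hmeasf hmeasg).symm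
    rw [IndepFun.integral_fun_mul_eq_mul_integral hind
        ((hmeasg.comp hZ).aestronglyMeasurable) ((hmeasf.comp hX).aestronglyMeasurable)]
    have h1 : ∫ ω, (if Z ω = i then (1 : ℝ) else 0) ∂P = (P (Z ⁻¹' {i})).toReal := by
      have : (fun ω => (if Z ω = i then (1 : ℝ) else 0))
          = Set.indicator (Z ⁻¹' {i}) (fun _ => (1 : ℝ)) := by
        funext ω
        by_cases h : Z ω = i <;> simp [Set.indicator, h]
      rw [this, integral_indicator_const _ (hZ (measurableSet_singleton i))]
      simp [Measure.real]
    have h2 : ∫ ω, Real.exp (t i * X ω) ∂P = φ i := by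
      have := integral_map (μ := P) hX.aemeasurable (f := fun x => Real.exp (t i * x))
        ((measurable_id.const_mul (t i)).exp.aestronglyMeasurable)
      rw [hXlaw, gauss_mgf] at this
      rw [← this, hφ i]
      simp only [ht]
      field_simp
    rw [h1, h2, hZlaw i]
  -- decomposition of the claim
  have key : ∫ ω, Real.exp (-(X ω * δ (Z ω)) / γ) ∂P
      = ∑ i : Fin N, ((NormedSpace.exp (T • A)) *ᵥ z₀) i * φ i := by
    have hdec : (fun ω => Real.exp (-(X ω * δ (Z ω)) / γ))
        = fun ω => ∑ i : Fin N, (if Z ω = i then (1 : ℝ) else 0) * Real.exp (t i * X ω) := by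
      funext ω
      rw [Finset.sum_eq_single (Z ω)]
      · have h' : t (Z ω) * X ω = -(X ω * δ (Z ω)) / γ := by
          simp only [ht]; ring
        simp [h']
      · intro b _ hb
        simp [Ne.symm hb]
      · simp
    rw [hdec, integral_finset_sum]
    · exact Finset.sum_congr rfl fun i _ => hterm i
    · intro i _
      have heq : (fun ω => (if Z ω = i then (1 : ℝ) else 0) * Real.exp (t i * X ω))
          = Set.indicator (Z ⁻¹' {i}) (fun ω => Real.exp (t i * X ω)) := by
        funext ω
        by_cases h : Z ω = i <;> simp [Set.indicator, h]
      rw [heq]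
      exact (hintX (t i)).indicator (hZ (measurableSet_singleton i))
  -- matrix identity
  have hmat : (NormedSpace.exp (T • Aᵀ) *ᵥ φ) ⬝ᵥ z₀
      = ∑ i : Fin N, ((NormedSpace.exp (T • A)) *ᵥ z₀) i * φ i := by
    have : T • Aᵀ = (T • A)ᵀ := (Matrix.transpose_smul T A).symm
    rw [this, Matrix.exp_transpose, Matrix.mulVec_transpose, ← Matrix.dotProduct_mulVec]
    rw [dotProduct]
    exact Finset.sum_congr rfl fun i _ => mul_comm _ _
  constructor
  · rw [key, hmat]
  · intro j hj
    rw [key, ← hmat, hj, dotProduct_single, mul_one, neg_mul]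
end

section
/- Let (Ω, ℱ, P) be a probability space, γ > 0, N ∈ ℕ, T ≥ 0, r, y ∈ ℝ, and let A : Matrix (Fin N) (Fin N) ℝ and z₀ : Fin N → ℝ. Let X : Ω → ℝ have Gaussian law with mean m_{0,T} := x₀·e^{−αT} + μ·(1 − e^{−αT}) and variance v_{0,T} := σ²·(1 − e^{−2αT})/(2α), where x₀, μ, σ ∈ ℝ and α > 0. Let Z : Ω → Fin N be measurable, independent of X, with P(Z = i) = ((Matrix.exp (T • A)) *ᵥ z₀)_i for every i. For δ : Fin N → ℝ define Φ_i := exp( −δ_i·exp(−(r+y)T)·m_{0,T}/γ + δ_i²·exp(−2(r+y)T)·v_{0,T}/(2γ²) ). Then the entropic risk of the futures claim F := exp(−(r+y)·T) · X · δ(Z) satisfies e_γ(F) = −γ · ln ⟨ (Matrix.exp (T • Aᵀ)) *ᵥ Φ , z₀ ⟩, where ⟨·,·⟩ is the Euclidean dot product on ℝ^N. -/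
open MeasureTheory ProbabilityTheory Matrix
open scoped NNReal ENNReal

lemma gaussianPDFReal_mul_exp_aux (m t : ℝ) {v : ℝ≥0} (hv : v ≠ 0) (x : ℝ) :
    gaussianPDFReal m v x * Real.exp (t * x)
      = Real.exp (m * t + (v : ℝ) * t ^ 2 / 2) * gaussianPDFReal (m + (v : ℝ) * t) v x := by
  have hv' : (0 : ℝ) < (v : ℝ) := by
    exact_mod_cast pos_iff_ne_zero.mpr hv
  unfold gaussianPDFReal
  have key : -(x - m) ^ 2 / (2 * (v : ℝ)) + t * x
      = (m * t + (v : ℝ) * t ^ 2 / 2) + (-(x - (m + (v : ℝ) * t)) ^ 2 / (2 * (v : ℝ))) := by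
    field_simp
    ring
  rw [mul_assoc, ← Real.exp_add, key, Real.exp_add]
  ring

lemma integral_exp_mul_gaussianReal_aux (m t : ℝ) (v : ℝ≥0) :
    ∫ x, Real.exp (t * x) ∂(gaussianReal m v)
      = Real.exp (m * t + (v : ℝ) * t ^ 2 / 2) := by
  by_cases hv : v = 0
  · subst hv
    rw [gaussianReal_zero_var, integral_dirac]
    norm_num [mul_comm]
  · rw [gaussianReal_of_var_ne_zero _ hv]
    have hmeas : Measurable fun x => (gaussianPDFReal m v x).toNNReal :=
      (measurable_gaussianPDFReal m v).real_toNNReal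
    rw [show (gaussianPDF m v)
        = (fun x => (((fun y => (gaussianPDFReal m v y).toNNReal) x : ℝ≥0) : ℝ≥0∞)) from rfl]
    rw [integral_withDensity_eq_integral_smul hmeas]
    simp_rw [NNReal.smul_def, smul_eq_mul,
      Real.coe_toNNReal _ (gaussianPDFReal_nonneg m v _),
      gaussianPDFReal_mul_exp_aux m t hv]
    rw [integral_const_mul, integral_gaussianPDFReal_eq_one _ hv, mul_one]

lemma integrable_exp_mul_gaussianReal_aux (m t : ℝ) (v : ℝ≥0) :
    Integrable (fun x => Real.exp (t * x)) (gaussianReal m v) := by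
  by_cases hv : v = 0
  · subst hv
    rw [gaussianReal_zero_var]
    refine (integrable_const (Real.exp (t * m))).congr ?_
    rw [Filter.eventuallyEq_comm, ae_dirac_eq]
    exact Filter.eventually_pure.mpr rfl
  · rw [gaussianReal_of_var_ne_zero _ hv]
    have hmeas : Measurable fun x => (gaussianPDFReal m v x).toNNReal :=
      (measurable_gaussianPDFReal m v).real_toNNReal
    rw [show (gaussianPDF m v)
        = (fun x => (((fun y => (gaussianPDFReal m v y).toNNReal) x : ℝ≥0) : ℝ≥0∞)) from rfl]
    rw [integrable_withDensity_iff_integrable_coe_smul hmeas]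
    simp_rw [smul_eq_mul, Real.coe_toNNReal _ (gaussianPDFReal_nonneg m v _),
      gaussianPDFReal_mul_exp_aux m t hv]
    exact (integrable_gaussianPDFReal _ _).const_mul _

/-- Lemma 2 of the paper: the entropic risk at time 0 of the futures claim
`F = e^{-(r+y)T} X_T ⟨δ, Z_T⟩`, where `X_T` is the time-`T` marginal of an Ornstein–Uhlenbeck
spot price (Gaussian with mean `m = x₀ e^{-αT} + μ(1 - e^{-αT})` and variance
`v = σ²(1 - e^{-2αT})/(2α)`) and `Z_T` is the time-`T` state of a Markov chain with rate matrix
`A` started at `z₀` (so it has distribution `exp(TA) z₀`), is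
`e_γ(F) = -γ ln ⟨exp(T Aᵀ) Φ, z₀⟩`. -/
theorem entropic_risk_regime_futures_markov {Ω : Type*} [MeasurableSpace Ω]
    (P : Measure Ω) [IsProbabilityMeasure P]
    (γ : ℝ) (hγ : 0 < γ) (N : ℕ) (T : ℝ) (hT : 0 ≤ T) (r y : ℝ)
    (A : Matrix (Fin N) (Fin N) ℝ) (z₀ : Fin N → ℝ)
    (x₀ μ σ α : ℝ) (hα : 0 < α)
    (m : ℝ) (hm : m = x₀ * Real.exp (-α * T) + μ * (1 - Real.exp (-α * T)))
    (v : ℝ≥0) (hv : (v : ℝ) = σ ^ 2 * (1 - Real.exp (-2 * α * T)) / (2 * α))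
    (X : Ω → ℝ) (hX : Measurable X) (hXlaw : P.map X = gaussianReal m v)
    (Z : Ω → Fin N) (hZ : Measurable Z) (hindep : IndepFun X Z P)
    (hZlaw : ∀ i, (P (Z ⁻¹' {i})).toReal = ((NormedSpace.exp (T • A)) *ᵥ z₀) i)
    (δ : Fin N → ℝ)
    (Φ : Fin N → ℝ)
    (hΦ : ∀ i, Φ i = Real.exp (-(δ i * Real.exp (-(r + y) * T) * m) / γ +
      (δ i) ^ 2 * Real.exp (-2 * (r + y) * T) * (v : ℝ) / (2 * γ ^ 2))) :
    -γ * Real.log (∫ ω, Real.exp (-(Real.exp (-(r + y) * T) * X ω * δ (Z ω)) / γ) ∂P) =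
      -γ * Real.log ((NormedSpace.exp (T • Aᵀ) *ᵥ Φ) ⬝ᵥ z₀) := by
  set c : ℝ := Real.exp (-(r + y) * T) with hc
  set θ : Fin N → ℝ := fun i => -(c * δ i) / γ with hθ
  -- Φ equals the gaussian mgf at θ i
  have hΦ' : ∀ i, Φ i = Real.exp (m * θ i + (v : ℝ) * θ i ^ 2 / 2) := by
    intro i
    have hc2 : Real.exp (-2 * (r + y) * T) = c ^ 2 := by
      rw [hc, sq, ← Real.exp_add]; ring_nf
    rw [hΦ i, hc2]
    congr 1
    simp only [hθ]
    field_simp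
  -- integrability of exp (θ i * X) under P
  have hmeasg : ∀ i, Measurable fun x : ℝ => Real.exp (θ i * x) := fun i =>
    (measurable_const_mul (θ i)).exp
  have hIntX : ∀ i, Integrable (fun ω => Real.exp (θ i * X ω)) P := by
    intro i
    have h1 : Integrable (fun x => Real.exp (θ i * x)) (P.map X) := by
      rw [hXlaw]; exact integrable_exp_mul_gaussianReal_aux m (θ i) v
    exact (integrable_map_measure (hmeasg i).aestronglyMeasurable hX.aemeasurable).mp h1
  have hintX : ∀ i, ∫ ω, Real.exp (θ i * X ω) ∂P = Real.exp (m * θ i + (v : ℝ) * θ i ^ 2 / 2) := by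
    intro i
    calc ∫ ω, Real.exp (θ i * X ω) ∂P
        = ∫ x, Real.exp (θ i * x) ∂(P.map X) :=
          (integral_map hX.aemeasurable (hmeasg i).aestronglyMeasurable).symm
      _ = Real.exp (m * θ i + (v : ℝ) * θ i ^ 2 / 2) := by
          rw [hXlaw]; exact integral_exp_mul_gaussianReal_aux m (θ i) v
  -- pointwise decomposition over the states of Z
  have hpoint : ∀ ω, Real.exp (-(c * X ω * δ (Z ω)) / γ)
      = ∑ i : Fin N, (if Z ω = i then (1 : ℝ) else 0) * Real.exp (θ i * X ω) := by
    intro ω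
    simp only [ite_mul, one_mul, zero_mul, Finset.sum_ite_eq, Finset.mem_univ, if_true]
    congr 1
    simp only [hθ]
    ring
  -- each summand is integrable
  have hIntSummand : ∀ i, Integrable
      (fun ω => (if Z ω = i then (1 : ℝ) else 0) * Real.exp (θ i * X ω)) P := by
    intro i
    refine (hIntX i).bdd_mul (c := 1) ?_ (Filter.Eventually.of_forall fun ω => ?_)
    · exact (Measurable.ite (hZ (measurableSet_singleton i)) measurable_const
        measurable_const).aestronglyMeasurable
    · by_cases h : Z ω = i <;> simp [h]
  -- independence gives the product formula per state
  have hprod : ∀ i, ∫ ω, (if Z ω = i then (1 : ℝ) else 0) * Real.exp (θ i * X ω) ∂P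
      = (P (Z ⁻¹' {i})).toReal * Real.exp (m * θ i + (v : ℝ) * θ i ^ 2 / 2) := by
    intro i
    have hmf : Measurable fun j : Fin N => (if j = i then (1 : ℝ) else 0) :=
      measurable_of_countable _
    have hind : IndepFun (fun ω => if Z ω = i then (1 : ℝ) else 0)
        (fun ω => Real.exp (θ i * X ω)) P :=
      hindep.symm.comp hmf (hmeasg i)
    have hmul := hind.integral_fun_mul_eq_mul_integral ((hmf.comp hZ).aestronglyMeasurable)
        (((hmeasg i).comp hX).aestronglyMeasurable)
    have hind_int : ∫ ω, (if Z ω = i then (1 : ℝ) else 0) ∂P = (P (Z ⁻¹' {i})).toReal := by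
      have heq : (fun ω => if Z ω = i then (1 : ℝ) else 0)
          = Set.indicator (Z ⁻¹' {i}) (fun _ => (1 : ℝ)) := by
        classical
        ext ω
        rw [Set.indicator_apply]
        simp only [Set.mem_preimage, Set.mem_singleton_iff]
      rw [heq, integral_indicator_const _ (hZ (measurableSet_singleton i)), smul_eq_mul, mul_one, Measure.real]
    calc ∫ ω, (if Z ω = i then (1 : ℝ) else 0) * Real.exp (θ i * X ω) ∂P
        = (∫ ω, (if Z ω = i then (1 : ℝ) else 0) ∂P) * ∫ ω, Real.exp (θ i * X ω) ∂P := hmul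
      _ = (P (Z ⁻¹' {i})).toReal * Real.exp (m * θ i + (v : ℝ) * θ i ^ 2 / 2) := by
          rw [hind_int, hintX i]
  -- compute the integral
  have hint : ∫ ω, Real.exp (-(c * X ω * δ (Z ω)) / γ) ∂P
      = ∑ i : Fin N, ((NormedSpace.exp (T • A)) *ᵥ z₀) i * Φ i := by
    calc ∫ ω, Real.exp (-(c * X ω * δ (Z ω)) / γ) ∂P
        = ∫ ω, ∑ i : Fin N, (if Z ω = i then (1 : ℝ) else 0) * Real.exp (θ i * X ω) ∂P := by
          exact integral_congr_ae (Filter.Eventually.of_forall hpoint)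
      _ = ∑ i : Fin N, ∫ ω, (if Z ω = i then (1 : ℝ) else 0) * Real.exp (θ i * X ω) ∂P :=
          integral_finset_sum _ (fun i _ => hIntSummand i)
      _ = ∑ i : Fin N, ((NormedSpace.exp (T • A)) *ᵥ z₀) i * Φ i := by
          refine Finset.sum_congr rfl fun i _ => ?_
          rw [hprod i, hZlaw i, hΦ' i]
  -- rewrite the matrix expression on the right
  have hmat : (NormedSpace.exp (T • Aᵀ) *ᵥ Φ) ⬝ᵥ z₀
      = ∑ i : Fin N, ((NormedSpace.exp (T • A)) *ᵥ z₀) i * Φ i := by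
    rw [show T • Aᵀ = (T • A)ᵀ from (Matrix.transpose_smul T A).symm,
      Matrix.exp_transpose, Matrix.mulVec_transpose, ← dotProduct_mulVec]
    simp only [dotProduct]
    exact Finset.sum_congr rfl fun i _ => mul_comm _ _
  rw [hint, hmat]
end
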